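/- arXiv:2503.05440 — 7 statements merged into one kernel-verified Lean document; each statement's English description precedes it below -/
import Mathlib

section
/- Let r ∈ ℤ with r ≥ 1, let i₁ ≤ i₂ ≤ ⋯ ≤ i_r be elements of {1,…,n}, let k₁,…,k_r ∈ ℤ, a₁,…,a_r ∈ ℤ with a_t ≥ 1, and let ℓ ≥ 2. Then there exist integers b₁,…,b_r with b₁ = 0 such that the sequence of points obtained by listing, for s = 1,…,r and t = b_s, b_s+1, …, b_s + a_s − 1, the points (i_s, k_s + 2tℓ), forms a snake: that is, each successive point (i', k') satisfies k' − k ≥ |i' − i| + 2 with respect to its predecessor (i,k). -/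
/-- Given weakly increasing `i₁ ≤ ⋯ ≤ i_r` in `{1,…,n}`, integers `k₁,…,k_r`,
multiplicities `a_t ≥ 1` and `ℓ ≥ 2`, there exist integers `b₁ = 0, b₂, …, b_r`
such that the concatenated sequence of points `(i_s, k_s + 2tℓ)`
(`t = b_s, …, b_s + a_s − 1`) forms a snake: each successive point `(i',k')`
satisfies `k' − k ≥ |i' − i| + 2` with respect to its predecessor `(i,k)`. -/
theorem stmt7 (n r : ℕ) (hn : 1 ≤ n) (hr : 1 ≤ r)
    (i : Fin r → ℕ) (hi : ∀ s, 1 ≤ i s ∧ i s ≤ n) (hmono : Monotone i)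
    (k : Fin r → ℤ) (a : Fin r → ℕ) (ha : ∀ s, 1 ≤ a s)
    (ℓ : ℕ) (hℓ : 2 ≤ ℓ) :
    ∃ b : Fin r → ℤ,
      b ⟨0, hr⟩ = 0 ∧
      -- consecutive points inside each block
      (∀ s : Fin r, ∀ t : ℕ, t + 1 < a s →
        (k s + 2 * (b s + t + 1) * ℓ) - (k s + 2 * (b s + t) * ℓ) ≥
          |(i s : ℤ) - (i s : ℤ)| + 2) ∧
      -- the first point of block `s+1` versus the last point of block `s`
      (∀ s : Fin r, ∀ h : s.1 + 1 < r,
        (k ⟨s.1 + 1, h⟩ + 2 * b ⟨s.1 + 1, h⟩ * ℓ) -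
            (k s + 2 * (b s + ((a s : ℤ) - 1)) * ℓ) ≥
          |(i ⟨s.1 + 1, h⟩ : ℤ) - (i s : ℤ)| + 2) := by
  set I : ℕ → ℤ := fun m => if h : m < r then (i ⟨m, h⟩ : ℤ) else 0 with hI
  set K : ℕ → ℤ := fun m => if h : m < r then k ⟨m, h⟩ else 0 with hK
  set A : ℕ → ℤ := fun m => if h : m < r then (a ⟨m, h⟩ : ℤ) else 1 with hA
  set g : ℕ → ℤ := fun m => Nat.rec 0
    (fun m gm => gm + (A m - 1) + max (K m - K (m + 1) + |I (m + 1) - I m| + 2) 0) m with hg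
  refine ⟨fun s => g s.1, rfl, ?_, ?_⟩
  · intro s t ht
    have h0 : |(i s : ℤ) - (i s : ℤ)| = 0 := by simp
    have hℓ' : (2 : ℤ) ≤ (ℓ : ℤ) := by exact_mod_cast hℓ
    rw [h0]
    ring_nf
    nlinarith [hℓ']
  · intro s h
    have hs : s.1 < r := s.2
    have hstep : g (s.1 + 1) = g s.1 + (A s.1 - 1) +
        max (K s.1 - K (s.1 + 1) + |I (s.1 + 1) - I s.1| + 2) 0 := rfl
    have hA1 : A s.1 = (a s : ℤ) := by simp [hA, hs]
    have hK1 : K s.1 = k s := by simp [hK, hs]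
    have hK2 : K (s.1 + 1) = k ⟨s.1 + 1, h⟩ := by simp [hK, h]
    have hI1 : I s.1 = (i s : ℤ) := by simp [hI, hs]
    have hI2 : I (s.1 + 1) = (i ⟨s.1 + 1, h⟩ : ℤ) := by simp [hI, h]
    set C := k s - k ⟨s.1 + 1, h⟩ + |(i ⟨s.1 + 1, h⟩ : ℤ) - (i s : ℤ)| + 2 with hC
    rw [hA1, hK1, hK2, hI1, hI2] at hstep
    show k ⟨s.1 + 1, h⟩ + 2 * g (s.1 + 1) * ℓ - (k s + 2 * (g s.1 + ((a s : ℤ) - 1)) * ℓ) ≥ _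
    rw [hstep]
    have hM1 : C ≤ max C 0 := le_max_left _ _
    have hM2 : (0 : ℤ) ≤ max C 0 := le_max_right _ _
    have hℓ' : (2 : ℤ) ≤ (ℓ : ℤ) := by exact_mod_cast hℓ
    nlinarith [hM1, hM2, hℓ']
end

section
/- Let ℓ ≥ 1, n ≥ 1, i, j ∈ {1,…,n}, k, v ∈ ℤ with k < v, and suppose (j,v) is such that v − k ≡ |j−i| (mod 2). Let h(i,j) = v − k and h₀(i,j) = |j−i| + 2, and let N = min{i, j, n+1−i, n+1−j}. If there exists s with 0 ≤ s < N such that h(i,j) ≡ −h₀(i,j) − 2s (mod 2ℓ), then there exists k' ∈ ℤ with k' ≡ k (mod 2ℓ), k' ≥ k, and (i,k') in prime snake position with respect to (j,v), i.e. min{2n+2−i−j, i+j} ≥ k' − v ≥ |j−i| + 2 and k' − v ≡ |j−i| (mod 2). -/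
/-- If `h(i,j) = v−k ≡ −h₀(i,j) − 2s (mod 2ℓ)` for some `0 ≤ s < N`,
`N = min{i,j,n+1−i,n+1−j}`, then there exists `k' ≡ k (mod 2ℓ)`, `k' ≥ k`,
with `(i,k')` in prime snake position with respect to `(j,v)`. -/
theorem stmt9 (ℓ n i j : ℕ) (hℓ : 1 ≤ ℓ) (hn : 1 ≤ n)
    (hi1 : 1 ≤ i) (hin : i ≤ n) (hj1 : 1 ≤ j) (hjn : j ≤ n) (k v : ℤ)
    (hkv : k < v)
    (hpar : v - k ≡ |(j : ℤ) - i| [ZMOD 2])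
    (hs : ∃ s : ℕ, s < min (min i j) (min (n + 1 - i) (n + 1 - j)) ∧
      v - k ≡ -(|(j : ℤ) - i| + 2) - 2 * s [ZMOD (2 * (ℓ : ℤ))]) :
    ∃ k' : ℤ, k' ≡ k [ZMOD (2 * (ℓ : ℤ))] ∧ k ≤ k' ∧
      k' - v ≤ min ((2 * n + 2 : ℤ) - i - j) ((i : ℤ) + j) ∧
      |(j : ℤ) - i| + 2 ≤ k' - v ∧
      k' - v ≡ |(j : ℤ) - i| [ZMOD 2] := by
  obtain ⟨s, hsN, hmod⟩ := hs
  set d : ℤ := |(j : ℤ) - i| with hd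
  have hd0 : 0 ≤ d := abs_nonneg _
  refine ⟨v + d + 2 + 2 * s, ?_, ?_, ?_, ?_, ?_⟩
  · -- congruence mod 2ℓ
    have h1 : (2 * (ℓ : ℤ)) ∣ (-(d + 2) - 2 * s) - (v - k) :=
      (Int.modEq_iff_dvd.mp hmod)
    rw [Int.modEq_iff_dvd]
    obtain ⟨c, hc⟩ := h1
    exact ⟨c, by linarith⟩
  · push_cast; linarith
  · -- upper bound
    have hsi : s < i := lt_of_lt_of_le hsN (le_trans (min_le_left _ _) (min_le_left _ _))
    have hsj : s < j := lt_of_lt_of_le hsN (le_trans (min_le_left _ _) (min_le_right _ _))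
    have hsi' : s < n + 1 - i := lt_of_lt_of_le hsN (le_trans (min_le_right _ _) (min_le_left _ _))
    have hsj' : s < n + 1 - j := lt_of_lt_of_le hsN (le_trans (min_le_right _ _) (min_le_right _ _))
    have hsi'' : (s : ℤ) + i < n + 1 := by
      have := Nat.add_lt_of_lt_sub hsi'
      exact_mod_cast Nat.cast_lt.mpr this
    have hsj'' : (s : ℤ) + j < n + 1 := by
      have := Nat.add_lt_of_lt_sub hsj'
      exact_mod_cast Nat.cast_lt.mpr this
    have hsiZ : (s : ℤ) < i := by exact_mod_cast hsi
    have hsjZ : (s : ℤ) < j := by exact_mod_cast hsj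
    rcases abs_cases ((j : ℤ) - i) with ⟨h1, h2⟩ | ⟨h1, h2⟩ <;>
      simp only [le_min_iff, hd, h1] <;> constructor <;> linarith
  · linarith [Int.natCast_nonneg s]
  · -- parity
    have : v + d + 2 + 2 * s - v = d + 2 + 2 * s := by ring
    rw [this, Int.modEq_iff_dvd]
    exact ⟨-(1 + s), by ring⟩
end

section
/- Let ℓ ≥ 1, n ≥ 1, i, j ∈ {1,…,n}, k, v ∈ ℤ with k < v, v − k ≡ |j−i| (mod 2), and v − k ≥ |j−i| + 2 + 2ℓ. Let N = min{i, j, n+1−i, n+1−j} and suppose there exists s with 0 ≤ s < N such that v − k ≡ |j−i| + 2 + 2s (mod 2ℓ). Then there exists v' ∈ ℤ with v' ≡ v (mod 2ℓ), v' < v, and (j,v') in prime snake position with respect to (i,k), i.e. min{2n+2−i−j, i+j} ≥ v' − k ≥ |j−i| + 2 and v' − k ≡ |j−i| (mod 2). -/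
/-- If `v − k ≥ |j−i| + 2 + 2ℓ` and `v − k ≡ |j−i| + 2 + 2s (mod 2ℓ)` for some
`0 ≤ s < N`, `N = min{i,j,n+1−i,n+1−j}`, then there exists `v' ≡ v (mod 2ℓ)`,
`v' < v`, with `(j,v')` in prime snake position with respect to `(i,k)`. -/
theorem stmt10 (ℓ n i j : ℕ) (hℓ : 1 ≤ ℓ) (hn : 1 ≤ n)
    (hi1 : 1 ≤ i) (hin : i ≤ n) (hj1 : 1 ≤ j) (hjn : j ≤ n) (k v : ℤ)
    (hkv : k < v)
    (hpar : v - k ≡ |(j : ℤ) - i| [ZMOD 2])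
    (hbig : v - k ≥ |(j : ℤ) - i| + 2 + 2 * ℓ)
    (hs : ∃ s : ℕ, s < min (min i j) (min (n + 1 - i) (n + 1 - j)) ∧
      v - k ≡ |(j : ℤ) - i| + 2 + 2 * s [ZMOD (2 * (ℓ : ℤ))]) :
    ∃ v' : ℤ, v' ≡ v [ZMOD (2 * (ℓ : ℤ))] ∧ v' < v ∧
      v' - k ≤ min ((2 * n + 2 : ℤ) - i - j) ((i : ℤ) + j) ∧
      |(j : ℤ) - i| + 2 ≤ v' - k ∧
      v' - k ≡ |(j : ℤ) - i| [ZMOD 2] := by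
  obtain ⟨s, hsN, hscong⟩ := hs
  set r : ℕ := s % ℓ with hr
  have habs : |(j : ℤ) - i| = (j : ℤ) - i ∨ |(j : ℤ) - i| = (i : ℤ) - j := by
    rcases le_total (i : ℤ) j with h | h
    · left; rw [abs_of_nonneg]; omega
    · right; rw [abs_of_nonpos] <;> omega
  have hrs1 : (r : ℤ) ≤ s := by exact_mod_cast Nat.mod_le s ℓ
  have hrs2 : (r : ℤ) < ℓ := by exact_mod_cast Nat.mod_lt s hℓ
  have hq' : (s : ℤ) = ℓ * (s / ℓ : ℕ) + r := by exact_mod_cast (Nat.div_add_mod s ℓ).symm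
  set q : ℤ := ((s / ℓ : ℕ) : ℤ) with hqdef
  obtain ⟨c, hc⟩ : (2 * (ℓ : ℤ)) ∣ (|(j : ℤ) - i| + 2 + 2 * s) - (v - k) :=
    Int.ModEq.dvd hscong
  have hsN' : (s : ℤ) < i ∧ (s : ℤ) < j ∧ (s : ℤ) + i < n + 1 ∧ (s : ℤ) + j < n + 1 := by
    have h1 : s < i := by omega
    have h2 : s < j := by omega
    have h3 : s + i < n + 1 := by omega
    have h4 : s + j < n + 1 := by omega
    exact ⟨by exact_mod_cast h1, by exact_mod_cast h2, by exact_mod_cast h3,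
      by exact_mod_cast h4⟩
  refine ⟨k + |(j : ℤ) - i| + 2 + 2 * r, ?_, ?_, ?_, ?_, ?_⟩
  · rw [Int.modEq_comm, Int.modEq_iff_dvd]
    refine ⟨c - q, ?_⟩
    have : k + |(j : ℤ) - i| + 2 + 2 * r - v
        = ((|(j : ℤ) - i| + 2 + 2 * s) - (v - k)) - 2 * ((s : ℤ) - r) := by ring
    rw [this, hc, hq']; ring
  · have h0 : (0:ℤ) ≤ |(j : ℤ) - i| := abs_nonneg _
    omega
  · rcases habs with h | h <;> rw [h] <;> simp only [le_min_iff] <;>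
      constructor <;> omega
  · omega
  · rw [Int.modEq_iff_dvd]
    exact ⟨-(1 + r), by push_cast; ring⟩
end

section
/- For all integers ρ ≥ 1 and t ≥ 1, the rational number f(t) = ρ · (∏_{s=1}^{t−1} (ρ + t + s)) / t! is a positive integer. -/
/-!
With `t = b + 1` and `n = ρ + 2b + 1`, the product is `n! / (ρ + t)!`, so
`f(t) = ρ n! / (t! (ρ + t)!)`. Over this common denominator `C(n, t)` and `C(n, t - 1)` have
numerators `n! (ρ + t)` and `n! t`, hence `f(t) = C(n, t) - C(n, t - 1)`: an integer, and a
nonnegative one because `t - 1 < n / 2`, where binomial coefficients still increase.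
Positivity is then read off the rational expression.
-/

open Finset Nat

lemma prod_Icc_add_mul_factorial (c b : ℕ) :
    (∏ s ∈ Icc 1 b, (c + s)) * c ! = (c + b)! := by
  induction b with
  | zero => simp
  | succ b ih =>
    rw [prod_Icc_succ_top (by omega), ← add_assoc, factorial_succ, ← ih]
    ring

lemma ballot_eq_choose_sub_choose (ρ b : ℕ) :
    (ρ : ℚ) * (ρ + 2 * b + 1)! / ((b + 1)! * (ρ + b + 1)!) =
      ((ρ + 2 * b + 1).choose (b + 1) : ℚ) - (ρ + 2 * b + 1).choose b := by
  rw [cast_choose ℚ (by omega : b + 1 ≤ ρ + 2 * b + 1),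
    cast_choose ℚ (by omega : b ≤ ρ + 2 * b + 1),
    show ρ + 2 * b + 1 - (b + 1) = ρ + b by omega, show ρ + 2 * b + 1 - b = ρ + b + 1 by omega,
    factorial_succ b, factorial_succ (ρ + b)]
  push_cast
  field_simp
  ring

/-- For `ρ ≥ 1` and `t ≥ 1`, `f(t) = ρ · (∏_{s=1}^{t−1} (ρ+t+s)) / t!` is a
positive integer. -/
theorem stmt12 (ρ t : ℕ) (hρ : 1 ≤ ρ) (ht : 1 ≤ t) :
    ∃ m : ℕ, 0 < m ∧
      ((ρ : ℚ) * ∏ s ∈ Finset.Icc 1 (t - 1), ((ρ : ℚ) + t + s)) / (Nat.factorial t : ℚ) =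
        m := by
  obtain ⟨b, rfl⟩ : ∃ b, t = b + 1 := ⟨t - 1, by omega⟩
  have hprod : ∏ s ∈ Icc 1 b, ((ρ : ℚ) + (b + 1 : ℕ) + s) =
      ((ρ + 2 * b + 1)! : ℚ) / (ρ + b + 1)! := by
    rw [eq_div_iff (by positivity)]
    exact_mod_cast show (∏ s ∈ Icc 1 b, (ρ + (b + 1) + s)) * (ρ + (b + 1))! =
        (ρ + 2 * b + 1)! by
      rw [prod_Icc_add_mul_factorial]; ring_nf
  have hle : (ρ + 2 * b + 1).choose b ≤ (ρ + 2 * b + 1).choose (b + 1) :=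
    choose_le_succ_of_lt_half_left (by omega)
  set m := (ρ + 2 * b + 1).choose (b + 1) - (ρ + 2 * b + 1).choose b
  have hf :
      ((ρ : ℚ) * ∏ s ∈ Icc 1 (b + 1 - 1), ((ρ : ℚ) + (b + 1 : ℕ) + s)) / (b + 1)! =
        m := by
    rw [add_tsub_cancel_right, hprod, cast_sub hle, ← ballot_eq_choose_sub_choose, mul_div_assoc',
      div_div, mul_comm ((ρ + b + 1)! : ℚ)]
  refine ⟨m, ?_, hf⟩
  have hm_pos : (0 : ℚ) < m := by
    rw [← hf, add_tsub_cancel_right, hprod]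
    positivity
  exact_mod_cast hm_pos
end

section
/- For all integers ρ ≥ 1 and t ≥ 1, the rational number g(t) = (ρ+1) · (∏_{s=2}^{t} (ρ + t + s)) / t! is a positive integer; moreover g(0) = 1 by convention. -/
private lemma prodN (c : ℕ) : ∀ t : ℕ, 1 ≤ t →
    (c+1).factorial * ∏ s ∈ Finset.Icc 2 t, (c+s) = (c+t).factorial := by
  intro t
  induction t with
  | zero => omega
  | succ n ih =>
    intro _
    rcases Nat.eq_zero_or_pos n with h | hn
    · subst h
      rw [Finset.Icc_eq_empty (by omega), Finset.prod_empty, Nat.mul_one]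
    · rw [Finset.prod_Icc_succ_top (by omega), ← Nat.mul_assoc, ih hn,
        ← Nat.add_assoc, Nat.factorial_succ, Nat.mul_comm]

/-- For `ρ ≥ 1` and `t ≥ 1`, `g(t) = (ρ+1) · (∏_{s=2}^{t} (ρ+t+s)) / t!` is a
positive integer (and by convention `g(0) = 1`). -/
theorem stmt13 (ρ t : ℕ) (hρ : 1 ≤ ρ) (ht : 1 ≤ t) :
    ∃ m : ℕ, 0 < m ∧
      (((ρ : ℚ) + 1) * ∏ s ∈ Finset.Icc 2 t, ((ρ : ℚ) + t + s)) / (Nat.factorial t : ℚ) =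
        m := by
  set N := ρ + 2 * t with hN
  have hle : N.choose (t-1) ≤ N.choose t := by
    have h2 : t - 1 < N / 2 := by
      have : t ≤ N / 2 := (Nat.le_div_iff_mul_le (by norm_num)).mpr (by omega)
      omega
    have := Nat.choose_le_succ_of_lt_half_left h2
    rwa [Nat.sub_add_cancel ht] at this
  have e1 : (N.choose t : ℚ) * (t.factorial : ℚ) * ((ρ+t).factorial : ℚ)
      = (N.factorial : ℚ) := by
    have := Nat.choose_mul_factorial_mul_factorial (n := N) (k := t) (by omega)
    have hNt : N - t = ρ + t := by omega
    rw [hNt] at this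
    exact_mod_cast congrArg (Nat.cast : ℕ → ℚ) this
  have e2 : (N.choose (t-1) : ℚ) * ((t-1).factorial : ℚ) * ((ρ+t+1).factorial : ℚ)
      = (N.factorial : ℚ) := by
    have := Nat.choose_mul_factorial_mul_factorial (n := N) (k := t-1) (by omega)
    have hNt : N - (t-1) = ρ + t + 1 := by omega
    rw [hNt] at this
    exact_mod_cast congrArg (Nat.cast : ℕ → ℚ) this
  have hP : ((ρ+t+1).factorial : ℚ) * (∏ s ∈ Finset.Icc 2 t, ((ρ : ℚ) + t + s))
      = (N.factorial : ℚ) := by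
    have := prodN (ρ + t) t ht
    have h2 : ρ + t + t = N := by omega
    rw [h2] at this
    have := congrArg (Nat.cast : ℕ → ℚ) this
    push_cast at this
    convert this using 3
  have fa : (t.factorial : ℚ) = (t : ℚ) * ((t-1).factorial : ℚ) := by
    have := Nat.mul_factorial_pred (n := t) (by omega)
    exact_mod_cast (congrArg (Nat.cast : ℕ → ℚ) this).symm
  have fd : ((ρ+t+1).factorial : ℚ) = ((ρ:ℚ)+t+1) * ((ρ+t).factorial : ℚ) := by
    rw [Nat.factorial_succ]; push_cast; ring
  have hA : (t.factorial : ℚ) ≠ 0 := by positivity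
  have hD : ((ρ+t+1).factorial : ℚ) ≠ 0 := by positivity
  have key : (((ρ : ℚ) + 1) * ∏ s ∈ Finset.Icc 2 t, ((ρ : ℚ) + t + s)) / (t.factorial : ℚ)
      = ((N.choose t - N.choose (t-1) : ℕ) : ℚ) := by
    rw [Nat.cast_sub hle, div_eq_iff hA]
    have hcancel : (((ρ:ℚ)+1) * ∏ s ∈ Finset.Icc 2 t, ((ρ : ℚ) + t + s))
        * ((ρ+t+1).factorial : ℚ)
        = (((N.choose t : ℚ) - (N.choose (t-1) : ℚ)) * (t.factorial : ℚ))
        * ((ρ+t+1).factorial : ℚ) := by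
      linear_combination ((ρ:ℚ)+1) * hP - (((ρ:ℚ)+t+1)) * e1 + (t:ℚ) * e2
        + (N.choose (t-1) : ℚ) * ((ρ+t+1).factorial : ℚ) * fa
        - (N.choose t : ℚ) * (t.factorial : ℚ) * fd
    exact mul_right_cancel₀ hD hcancel
  refine ⟨N.choose t - N.choose (t-1), ?_, key⟩
  have hpos : 0 < (((ρ : ℚ) + 1) * ∏ s ∈ Finset.Icc 2 t, ((ρ : ℚ) + t + s))
      / (t.factorial : ℚ) := by
    apply div_pos
    · apply mul_pos (by positivity)
      apply Finset.prod_pos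
      intro s hs
      positivity
    · positivity
  rw [key] at hpos
  exact_mod_cast hpos
end

section
/- Let p = (y₀,…,y_{n+1}) ∈ 𝒫_{i,k} and let j, r be integers with 1 ≤ r < j, j + r ≤ n+1, such that (j, y_j) is an upper corner of p, y_{j−r} = y_j + r = y_{j+r}, and for every index c with j−r < c < j+r and c ≠ j, the point (c, y_c) is neither an upper nor a lower corner of p. Define p' by replacing the segment of p between columns j−r and j+r with the 'V flipped to Λ' segment: y'_c = y_{j−r} + (c − (j−r)) for j−r ≤ c ≤ j, y'_c = y_{j+r} + ((j+r) − c) for j ≤ c ≤ j+r, and y'_c = y_c otherwise. Then p' ∈ 𝒫_{i,k}, the point (j, y_j + 2r) is a lower corner of p', and the lowering move followed by the corresponding raising move returns the original path p. -/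
/-- A path in `𝒫_{i,k}`. -/
def IsPath (n i : ℕ) (k : ℤ) (y : ℕ → ℤ) : Prop :=
  y 0 = (i : ℤ) + k ∧ y (n + 1) = (n : ℤ) + 1 - i + k ∧
    ∀ j ≤ n, y (j + 1) - y j = 1 ∨ y (j + 1) - y j = -1

/-- Upper corner at `(r, y_r)`. -/
def IsUpperCorner (n : ℕ) (y : ℕ → ℤ) (r : ℕ) : Prop :=
  1 ≤ r ∧ r ≤ n ∧ y (r - 1) = y r + 1 ∧ y (r + 1) = y r + 1

/-- Lower corner at `(r, y_r)`. -/
def IsLowerCorner (n : ℕ) (y : ℕ → ℤ) (r : ℕ) : Prop :=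
  1 ≤ r ∧ r ≤ n ∧ y (r - 1) = y r - 1 ∧ y (r + 1) = y r - 1

lemma mono_aux (n : ℕ) (y : ℕ → ℤ)
    (h : ∀ t ≤ n, y (t + 1) - y t = 1 ∨ y (t + 1) - y t = -1) :
    ∀ b ≤ n + 1, ∀ a ≤ b, y a + a ≤ y b + b ∧ y b - b ≤ y a - a := by
  intro b
  induction b with
  | zero => intro _ a ha; interval_cases a; simp
  | succ m ih =>
    intro hb a ha
    rcases Nat.eq_or_lt_of_le ha with rfl | h'
    · exact ⟨le_refl _, le_refl _⟩
    · have hm : a ≤ m := Nat.lt_succ_iff.mp h'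
      obtain ⟨h1, h2⟩ := ih (by omega) a hm
      rcases h m (by omega) with hs | hs <;> push_cast <;> omega

lemma key_aux (n : ℕ) (y : ℕ → ℤ) (j r : ℕ)
    (h : ∀ t ≤ n, y (t + 1) - y t = 1 ∨ y (t + 1) - y t = -1)
    (hr1 : 1 ≤ r) (hrj : r < j) (hjr : j + r ≤ n + 1)
    (hleft : y (j - r) = y j + r) (hright : y (j + r) = y j + r) :
    ∀ c, j - r ≤ c → c ≤ j + r → y c = y j + |(c : ℤ) - j| := by
  intro c h1 h2
  rcases le_or_gt c j with hcj | hcj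
  · obtain ⟨ha, _⟩ := mono_aux n y h c (by omega) (j - r) h1
    obtain ⟨hb, _⟩ := mono_aux n y h j (by omega) c hcj
    rw [abs_of_nonpos (by omega)]
    omega
  · obtain ⟨_, ha⟩ := mono_aux n y h (j + r) (by omega) c h2
    obtain ⟨_, hb⟩ := mono_aux n y h c (by omega) j hcj.le
    rw [abs_of_nonneg (by omega)]
    omega

/-- The width-`r` lowering move: replacing the `V` segment of `p` between columns
`j−r` and `j+r` by the `Λ` segment produces a path `p' ∈ 𝒫_{i,k}` with a lower
corner `(j, y_j + 2r)`, and the corresponding raising move returns `p`. -/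
theorem stmt14 (n i : ℕ) (k : ℤ) (y : ℕ → ℤ) (j r : ℕ)
    (hpath : IsPath n i k y)
    (hr1 : 1 ≤ r) (hrj : r < j) (hjr : j + r ≤ n + 1)
    (hup : IsUpperCorner n y j)
    (hleft : y (j - r) = y j + r) (hright : y (j + r) = y j + r)
    (hnocorner : ∀ c, j - r < c → c < j + r → c ≠ j →
      ¬ IsUpperCorner n y c ∧ ¬ IsLowerCorner n y c) :
    IsPath n i k
      (fun c => if j - r ≤ c ∧ c ≤ j + r then y j + 2 * r - |(c : ℤ) - j| else y c) ∧
    IsLowerCorner n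
      (fun c => if j - r ≤ c ∧ c ≤ j + r then y j + 2 * r - |(c : ℤ) - j| else y c) j ∧
    (fun c : ℕ => if j - r ≤ c ∧ c ≤ j + r then y j + 2 * r - |(c : ℤ) - j| else y c) j =
      y j + 2 * r ∧
    ∀ c ≤ n + 1,
      (if j - r ≤ c ∧ c ≤ j + r then
          (fun c' : ℕ => if j - r ≤ c' ∧ c' ≤ j + r then y j + 2 * r - |(c' : ℤ) - j| else y c') j
            - 2 * r + |(c : ℤ) - j|
        else
          (fun c' : ℕ => if j - r ≤ c' ∧ c' ≤ j + r then y j + 2 * r - |(c' : ℤ) - j| else y c') c)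
        = y c := by
  obtain ⟨h0, hN, hstep⟩ := hpath
  have key := key_aux n y j r hstep hr1 hrj hjr hleft hright
  set y' : ℕ → ℤ := fun c => if j - r ≤ c ∧ c ≤ j + r then y j + 2 * r - |(c : ℤ) - j| else y c
    with hy'
  have hval : ∀ c, j - r ≤ c → c ≤ j + r → y' c = y j + 2 * r - |(c : ℤ) - j| := by
    intro c h1 h2; simp only [hy']; rw [if_pos ⟨h1, h2⟩]
  have hout : ∀ c, ¬ (j - r ≤ c ∧ c ≤ j + r) → y' c = y c := by
    intro c hc; simp only [hy']; rw [if_neg hc]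
  have habs : ∀ c : ℕ, c ≤ j → |(c : ℤ) - j| = (j : ℤ) - c := by
    intro c hc; rw [abs_of_nonpos (by omega)]; ring
  have habs' : ∀ c : ℕ, j ≤ c → |(c : ℤ) - j| = (c : ℤ) - j := by
    intro c hc; rw [abs_of_nonneg (by omega)]
  refine ⟨⟨?_, ?_, ?_⟩, ⟨by omega, by omega, ?_, ?_⟩, ?_, ?_⟩
  · rw [hout 0 (by omega)]; exact h0
  · by_cases hc : j + r = n + 1
    · rw [hval (n + 1) (by omega) (by omega), habs' (n + 1) (by omega)]
      rw [← hc] at hN ⊢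
      rw [hright] at hN; push_cast [hc] at hN ⊢; omega
    · rw [hout (n + 1) (by omega)]; exact hN
  · -- steps
    intro c hc
    rcases hstep c hc with hs | hs
    all_goals {
      by_cases h1 : j - r ≤ c ∧ c + 1 ≤ j + r
      · -- both (or c+1) in interval; if c itself in interval use formula
        rw [hval c h1.1 (by omega), hval (c + 1) (by omega) h1.2]
        rcases le_or_gt (c + 1) j with hcj | hcj
        · rw [habs c (by omega), habs (c + 1) hcj]; push_cast; left; ring
        · rw [habs' (c + 1) (by omega)]
          rcases le_or_gt c j with h2 | h2
          · rw [habs c h2]; push_cast; right; omega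
          · rw [habs' c h2.le]; push_cast; right; ring
      · -- at least one endpoint outside interval
        have e1 : y' c = y c := by
          by_cases hin : j - r ≤ c ∧ c ≤ j + r
          · have hcc : c = j - r ∨ c = j + r := by omega
            rcases hcc with rfl | rfl
            · rw [hval _ le_rfl (by omega), habs _ (by omega), hleft]; push_cast; omega
            · rw [hval _ (by omega) le_rfl, habs' _ (by omega), hright]; push_cast; omega
          · exact hout c hin
        have e2 : y' (c + 1) = y (c + 1) := by
          by_cases hin : j - r ≤ c + 1 ∧ c + 1 ≤ j + r
          · have : c + 1 = j - r := by omega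
            rw [this, hval _ le_rfl (by omega), habs _ (by omega), hleft]; push_cast; omega
          · exact hout (c + 1) hin
        rw [e1, e2]
        first | exact Or.inl hs | exact Or.inr hs
    }
  · -- lower corner: y' (j - 1)
    rw [hval (j - 1) (by omega) (by omega), hval j (by omega) (by omega),
      habs (j - 1) (by omega), habs j le_rfl]
    push_cast [Nat.cast_sub (by omega : 1 ≤ j)]; ring
  · rw [hval (j + 1) (by omega) (by omega), hval j (by omega) (by omega),
      habs' (j + 1) (by omega), habs j le_rfl]
    push_cast; ring
  · show y' j = y j + 2 * r
    rw [hval j (by omega) (by omega), habs j le_rfl]; push_cast; ring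
  · intro c hc
    by_cases hin : j - r ≤ c ∧ c ≤ j + r
    · simp only [if_pos hin]
      show y' j - 2 * r + |(c : ℤ) - j| = y c
      rw [hval j (by omega) (by omega), habs j le_rfl, key c hin.1 hin.2]
      push_cast; ring
    · simp only [if_neg hin]
      exact hout c hin
end

section
/- Let ℓ ≥ 2, n ≥ 1, i ∈ {1,…,n} with i ≤ ⌊(n+1)/2⌋, let 1 ≤ z < ℓ and k₁ < k₂ < ⋯ < k_z with k_{t+1} = k_t + 2 for all t, and assume k_z + 2i − k₁ < 2ℓ. For p_t ∈ 𝒫_{i,k_t} (t = 1,…,z), the tuple (p₁,…,p_z) is non-overlapping (p_s strictly above p_t for s < t, i.e. at every common column the height of p_s is strictly less than that of p_t) if and only if the tuple is disjoint in the tube obtained by identifying row y with row y + 2ℓ, i.e. for all s ≠ t the images of p_s and p_t under reduction of heights modulo 2ℓ share no common point. -/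
/-- For `1 ≤ z < ℓ`, `i ≤ ⌊(n+1)/2⌋`, `k_{t+1} = k_t + 2` and
`k_z + 2i − k₁ < 2ℓ`, a tuple of paths `p_t ∈ 𝒫_{i,k_t}` is non-overlapping
(`p_s` strictly above `p_t` for `s < t`) iff it is disjoint in the tube obtained
by identifying heights modulo `2ℓ`. -/
theorem stmt16 (ℓ n z i : ℕ) (hℓ : 2 ≤ ℓ) (hn : 1 ≤ n)
    (hi1 : 1 ≤ i) (hi2 : i ≤ (n + 1) / 2)
    (hz1 : 1 ≤ z) (hz2 : z < ℓ)
    (k : Fin z → ℤ)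
    (hk : ∀ t : Fin z, ∀ h : t.1 + 1 < z, k ⟨t.1 + 1, h⟩ = k t + 2)
    (hbound : k ⟨z - 1, by omega⟩ + 2 * i - k ⟨0, by omega⟩ < 2 * ℓ)
    (p : Fin z → ℕ → ℤ) (hp : ∀ t, IsPath n i (k t) (p t)) :
    (∀ s t : Fin z, s < t → ∀ c ≤ n + 1, p s c < p t c) ↔
      (∀ s t : Fin z, s ≠ t → ∀ c ≤ n + 1,
        ¬ (p s c ≡ p t c [ZMOD (2 * (ℓ : ℤ))])) := by
  have hz0 : 0 < z := hz1
  -- k is an arithmetic progression with common difference 2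
  have hkgen : ∀ a : ℕ, ∀ h : a < z, k ⟨a, h⟩ = k ⟨0, hz0⟩ + 2 * (a : ℤ) := by
    intro a
    induction a with
    | zero =>
      intro h
      simp
    | succ a ih =>
      intro h
      have h' : a < z := by omega
      have step : k ⟨a + 1, h⟩ = k ⟨a, h'⟩ + 2 := hk ⟨a, h'⟩ h
      rw [step, ih h']
      push_cast
      ring
  have hb1 : k ⟨z - 1, by omega⟩ + 2 * (i : ℤ) - k ⟨0, hz0⟩ < 2 * ℓ := hbound
  rw [hkgen (z - 1) (by omega)] at hb1
  -- upper bound from the left endpoint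
  have upper : ∀ t : Fin z, ∀ c ≤ n + 1, p t c ≤ (i : ℤ) + k t + c := by
    intro t c
    induction c with
    | zero =>
      intro _
      rw [(hp t).1]
      simp
    | succ c ih =>
      intro hc
      have h1 := ih (by omega)
      have h2 := (hp t).2.2 c (by omega)
      rcases h2 with h | h <;> omega
  -- lower bound from the right endpoint
  have lower : ∀ t : Fin z, ∀ c ≤ n + 1, (c : ℤ) - i + k t ≤ p t c := by
    intro t
    have H : ∀ j ≤ n + 1, ((n + 1 - j : ℕ) : ℤ) - i + k t ≤ p t (n + 1 - j) := by
      intro j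
      induction j with
      | zero =>
        intro _
        simp only [Nat.sub_zero]
        rw [(hp t).2.1]
        omega
      | succ j ih =>
        intro hj
        have ihh := ih (by omega)
        have hstep := (hp t).2.2 (n - j) (by omega)
        have e : n - j + 1 = n + 1 - j := by omega
        rw [e] at hstep
        have e2 : n + 1 - (j + 1) = n - j := by omega
        rw [e2]
        rcases hstep with h | h <;> omega
    intro c hc
    have := H (n + 1 - c) (by omega)
    rw [show n + 1 - (n + 1 - c) = c from by omega] at this
    exact this
  constructor
  · intro hno s t hst c hc hmod
    have key : ∀ s t : Fin z, s < t → ¬ p s c ≡ p t c [ZMOD (2 * (ℓ : ℤ))] := by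
      intro s t h hm
      have hd : (2 * (ℓ : ℤ)) ∣ (p t c - p s c) := Int.ModEq.dvd hm
      have h1 : 0 < p t c - p s c := by
        have := hno s t h c hc
        omega
      have h2 : p t c - p s c < 2 * ℓ := by
        have hu := upper t c hc
        have hl := lower s c hc
        have e1 : k t = k ⟨0, hz0⟩ + 2 * (t.1 : ℤ) := hkgen t.1 t.2
        have e2 : k s = k ⟨0, hz0⟩ + 2 * (s.1 : ℤ) := hkgen s.1 s.2
        have ht2 : t.1 < z := t.2
        omega
      have := Int.le_of_dvd h1 hd
      omega
    rcases hst.lt_or_gt with h | h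
    · exact key s t h hmod
    · exact key t s h hmod.symm
  · intro hdis s t hst c hc
    have e1 : k t = k ⟨0, hz0⟩ + 2 * (t.1 : ℤ) := hkgen t.1 t.2
    have e2 : k s = k ⟨0, hz0⟩ + 2 * (s.1 : ℤ) := hkgen s.1 s.2
    have hst' : s.1 < t.1 := hst
    have main : ∀ c ≤ n + 1, 2 ≤ p t c - p s c ∧ (2 : ℤ) ∣ (p t c - p s c) := by
      intro c
      induction c with
      | zero =>
        intro _
        rw [(hp t).1, (hp s).1]
        constructor <;> omega
      | succ c ih =>
        intro hc
        obtain ⟨ih1, ih2⟩ := ih (by omega)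
        have st := (hp t).2.2 c (by omega)
        have ss := (hp s).2.2 c (by omega)
        have hne : p t (c + 1) - p s (c + 1) ≠ 0 := by
          intro h0
          have heq : p s (c + 1) = p t (c + 1) := by omega
          exact hdis s t (ne_of_lt hst) (c + 1) hc (by rw [heq])
        rcases st with h1 | h1 <;> rcases ss with h2 | h2 <;> constructor <;> omega
    have := (main c hc).1
    omega
end
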